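/- Mill's ratio r(x) = e^{x²/2} ∫_x^∞ e^{-t²/2} dt satisfies, for all x ≥ 0: 2/(x + sqrt(x² + 4)) < r(x) < 4/(3x + sqrt(x² + 8)). -/

import Mathlib

open MeasureTheory

/-- Mill's ratio of the standard normal distribution:
`r(x) = e^{x²/2} ∫_x^∞ e^{-t²/2} dt`. -/
noncomputable def millsRatio (x : ℝ) : ℝ :=
  Real.exp (x ^ 2 / 2) * ∫ t in Set.Ioi x, Real.exp (-t ^ 2 / 2)

/-!
The Mills ratio is positive, satisfies `x r < 1` (compare `x ∫_x^∞ e^{-t²/2}` with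
`∫_x^∞ t e^{-t²/2} = e^{-x²/2}`) and solves `r' = x r - 1`. If a bounded `F` satisfies
`F' > y F` on `[x, ∞)`, then `F e^{-y²/2}` is strictly increasing and tends to `0`,
so `F x < 0`.
Along `r' = x r - 1`, `F = 1 - x r - r²` has `F' - x F = r (1 - x r) > 0`, whence
`r² + x r > 1`; and `F = (1 - x r)(2 - x r) - r²` has
`F' - x F = (1 - x r)(x (1 - x r) - r) < 0`, whence `r² < (1 - x r)(2 - x r)`.
Solving these two quadratic inequalities for `r` gives the bounds.
-/

open Real Set Filter Topology

theorem integral_Ioi_pos {f : ℝ → ℝ} {a : ℝ} (hf : IntegrableOn f (Ioi a))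
    (hpos : ∀ t ∈ Ioi a, 0 < f t) : 0 < ∫ t in Ioi a, f t := by
  rw [setIntegral_pos_iff_support_of_nonneg_ae _ hf]
  · rw [inter_eq_right.2 fun t ht => Function.mem_support.2 (hpos t ht).ne', volume_Ioi]
    exact ENNReal.zero_lt_top
  · exact (ae_restrict_iff' measurableSet_Ioi).2 (.of_forall fun t ht => (hpos t ht).le)

theorem hasDerivAt_integral_Ioi {f : ℝ → ℝ} {a x : ℝ} (hf : IntegrableOn f (Ioi a))
    (hax : a < x) (hcont : ContinuousAt f x) :
    HasDerivAt (fun y => ∫ t in Ioi y, f t) (-f x) x := by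
  have hint : HasDerivAt (fun y => ∫ t in a..y, f t) (f x) x :=
    intervalIntegral.integral_hasDerivAt_right
      ((intervalIntegrable_iff_integrableOn_Ioc_of_le hax.le).2 (hf.mono_set Ioc_subset_Ioi_self))
      (AEStronglyMeasurable.stronglyMeasurableAtFilter_of_mem hf.1 (Ioi_mem_nhds hax)) hcont
  refine (hint.const_sub (∫ t in Ioi a, f t)).congr_of_eventuallyEq ?_
  filter_upwards [Ioi_mem_nhds hax] with y hy
  rw [← intervalIntegral.integral_Ioi_sub_Ioi hf hy.le, sub_sub_cancel]

theorem StrictMonoOn.lt_of_tendsto_atTop {α β : Type*} [LinearOrder α] [NoMaxOrder α]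
    [Preorder β] [TopologicalSpace β] [OrderClosedTopology β] {w : α → β} {a : α} {c : β}
    (hw : StrictMonoOn w (Ici a)) (hlim : Tendsto w atTop (𝓝 c)) : w a < c := by
  obtain ⟨b, hab⟩ := exists_gt a
  have : Nonempty α := ⟨a⟩
  refine (hw self_mem_Ici hab.le hab).trans_le (ge_of_tendsto hlim ?_)
  filter_upwards [eventually_ge_atTop b] with y hby
  exact hw.monotoneOn hab.le (hab.le.trans hby) hby

theorem hasDerivAt_exp_neg_sq_div_two (y : ℝ) :
    HasDerivAt (fun t => exp (-t ^ 2 / 2)) (-y * exp (-y ^ 2 / 2)) y := by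
  have h : HasDerivAt (fun t : ℝ => -t ^ 2 / 2) (-y) y :=
    ((hasDerivAt_pow 2 y).fun_neg.div_const 2).congr_deriv (by ring)
  simpa [mul_comm] using h.exp

theorem tendsto_exp_neg_sq_div_two_atTop :
    Tendsto (fun t : ℝ => exp (-t ^ 2 / 2)) atTop (𝓝 0) :=
  tendsto_exp_atBot.comp <| Tendsto.atBot_div_const two_pos <|
    tendsto_neg_atTop_atBot.comp (tendsto_pow_atTop two_ne_zero)

theorem integrable_exp_neg_sq_div_two : Integrable fun t : ℝ => exp (-t ^ 2 / 2) := by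
  convert integrable_exp_neg_mul_sq (b := 1 / 2) (by norm_num) using 3
  ring

theorem integrable_mul_exp_neg_sq_div_two : Integrable fun t : ℝ => t * exp (-t ^ 2 / 2) := by
  convert integrable_mul_exp_neg_mul_sq (b := 1 / 2) (by norm_num) using 4
  ring

theorem integral_Ioi_mul_exp_neg_sq_div_two (x : ℝ) :
    ∫ t in Ioi x, t * exp (-t ^ 2 / 2) = exp (-x ^ 2 / 2) := by
  have h := integral_Ioi_of_hasDerivAt_of_tendsto' (f' := fun t => t * exp (-t ^ 2 / 2))
    (fun y _ => (hasDerivAt_exp_neg_sq_div_two y).neg.congr_deriv (by ring))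
    (integrable_mul_exp_neg_sq_div_two.integrableOn (s := Ioi x))
    tendsto_exp_neg_sq_div_two_atTop.neg
  simpa using h

theorem neg_of_mul_lt_deriv {F F' : ℝ → ℝ} {a : ℝ}
    (hF : ∀ y ∈ Ici a, HasDerivAt F (F' y) y) (hlt : ∀ y ∈ Ici a, y * F y < F' y)
    (hbdd : IsBoundedUnder (· ≤ ·) atTop (fun y => ‖F y‖)) : F a < 0 := by
  set w := fun y => F y * exp (-y ^ 2 / 2)
  have hw : ∀ y ∈ Ici a, HasDerivAt w ((F' y - y * F y) * exp (-y ^ 2 / 2)) y := fun y hy =>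
    ((hF y hy).mul (hasDerivAt_exp_neg_sq_div_two y)).congr_deriv (by ring)
  have hmono : StrictMonoOn w (Ici a) := by
    refine strictMonoOn_of_hasDerivWithinAt_pos (convex_Ici a)
      (f' := fun y => (F' y - y * F y) * exp (-y ^ 2 / 2))
      (fun y hy => (hw y hy).continuousAt.continuousWithinAt) (fun y hy => ?_) (fun y hy => ?_)
    · rw [interior_Ici] at hy
      exact (hw y (mem_Ici_of_Ioi hy)).hasDerivWithinAt
    · rw [interior_Ici] at hy
      exact mul_pos (sub_pos.2 (hlt y (mem_Ici_of_Ioi hy))) (exp_pos _)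
  have hwa : w a < 0 :=
    hmono.lt_of_tendsto_atTop <|
      isBoundedUnder_le_mul_tendsto_zero hbdd tendsto_exp_neg_sq_div_two_atTop
  exact neg_of_mul_neg_left hwa (exp_pos _).le

theorem pos_of_deriv_lt_mul {F F' : ℝ → ℝ} {a : ℝ}
    (hF : ∀ y ∈ Ici a, HasDerivAt F (F' y) y) (hlt : ∀ y ∈ Ici a, F' y < y * F y)
    (hbdd : IsBoundedUnder (· ≤ ·) atTop (fun y => ‖F y‖)) : 0 < F a := by
  have := neg_of_mul_lt_deriv (F := fun y => -F y) (fun y hy => (hF y hy).neg)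
    (fun y hy => by simpa using hlt y hy) (by simpa using hbdd)
  simpa using this

theorem millsRatio_pos (x : ℝ) : 0 < millsRatio x :=
  mul_pos (exp_pos _) <|
    integral_Ioi_pos integrable_exp_neg_sq_div_two.integrableOn fun _ _ => exp_pos _

theorem exp_sq_div_two_mul_exp_neg_sq_div_two (x : ℝ) :
    exp (x ^ 2 / 2) * exp (-x ^ 2 / 2) = 1 := by
  rw [← exp_add, neg_div, add_neg_cancel, exp_zero]

theorem mul_integral_Ioi_exp_neg_sq_div_two_lt (x : ℝ) :
    x * ∫ t in Ioi x, exp (-t ^ 2 / 2) < exp (-x ^ 2 / 2) := by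
  have hpos : 0 < ∫ t in Ioi x, (t - x) * exp (-t ^ 2 / 2) :=
    integral_Ioi_pos ((integrable_mul_exp_neg_sq_div_two.sub
      (integrable_exp_neg_sq_div_two.const_mul x)).integrableOn.congr_fun
        (fun t _ => by simp only [Pi.sub_apply]; ring) measurableSet_Ioi)
      fun t ht => mul_pos (sub_pos.2 ht) (exp_pos _)
  have heq : ∫ t in Ioi x, (t - x) * exp (-t ^ 2 / 2) =
      exp (-x ^ 2 / 2) - x * ∫ t in Ioi x, exp (-t ^ 2 / 2) := by
    simp_rw [sub_mul]
    rw [integral_sub integrable_mul_exp_neg_sq_div_two.integrableOn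
      (integrable_exp_neg_sq_div_two.const_mul x).integrableOn, integral_const_mul,
      integral_Ioi_mul_exp_neg_sq_div_two]
  linarith

theorem mul_millsRatio_lt_one (x : ℝ) : x * millsRatio x < 1 := by
  have h := mul_lt_mul_of_pos_left (mul_integral_Ioi_exp_neg_sq_div_two_lt x)
    (exp_pos (x ^ 2 / 2))
  rw [exp_sq_div_two_mul_exp_neg_sq_div_two] at h
  rw [millsRatio]
  linarith

theorem hasDerivAt_millsRatio (x : ℝ) : HasDerivAt millsRatio (x * millsRatio x - 1) x := by
  have hexp : HasDerivAt (fun y => exp (y ^ 2 / 2)) (x * exp (x ^ 2 / 2)) x := by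
    have h : HasDerivAt (fun y : ℝ => y ^ 2 / 2) x x :=
      ((hasDerivAt_pow 2 x).div_const 2).congr_deriv (by ring)
    simpa [mul_comm] using h.exp
  have htail := hasDerivAt_integral_Ioi integrable_exp_neg_sq_div_two.integrableOn
    (sub_one_lt x) (continuous_exp.comp (by fun_prop)).continuousAt
  refine (hexp.fun_mul htail).congr_deriv ?_
  rw [mul_neg, exp_sq_div_two_mul_exp_neg_sq_div_two, millsRatio]
  ring

theorem millsRatio_mem_Ioo_of_one_le {x : ℝ} (hx : 1 ≤ x) :
    millsRatio x ∈ Ioo 0 1 ∧ x * millsRatio x ∈ Ioo 0 1 := by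
  have hr := millsRatio_pos x
  have hxr := mul_millsRatio_lt_one x
  exact ⟨⟨hr, by nlinarith⟩, by positivity, hxr⟩

theorem one_lt_millsRatio_sq_add_mul_millsRatio (x : ℝ) :
    1 < millsRatio x ^ 2 + x * millsRatio x := by
  set r := millsRatio
  have hF (y : ℝ) : HasDerivAt (fun y => 1 - y * r y - r y ^ 2)
      (r y * (1 - y * r y) + y * (1 - y * r y - r y ^ 2)) y :=
    ((((hasDerivAt_id y).fun_mul (hasDerivAt_millsRatio y)).const_sub 1).fun_sub
      ((hasDerivAt_millsRatio y).fun_pow 2)).congr_deriv (by simp only [id_eq]; ring)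
  have hbdd : IsBoundedUnder (· ≤ ·) atTop fun y => ‖1 - y * r y - r y ^ 2‖ := by
    refine isBoundedUnder_of_eventually_le (a := 1) ?_
    filter_upwards [eventually_ge_atTop 1] with y hy
    obtain ⟨⟨h0, h1⟩, h2, h3⟩ : r y ∈ Ioo 0 1 ∧ y * r y ∈ Ioo 0 1 :=
      millsRatio_mem_Ioo_of_one_le hy
    rw [norm_eq_abs, abs_le]
    constructor <;> nlinarith
  have := neg_of_mul_lt_deriv (a := x) (fun y _ => hF y)
    (fun y _ => by nlinarith [millsRatio_pos y, mul_millsRatio_lt_one y]) hbdd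
  linarith

theorem mul_one_sub_mul_millsRatio_lt_millsRatio (x : ℝ) :
    x * (1 - x * millsRatio x) < millsRatio x := by
  have hr := millsRatio_pos x
  have hxr := mul_millsRatio_lt_one x
  rcases le_or_gt x 0 with hx | hx
  · nlinarith
  · nlinarith [one_lt_millsRatio_sq_add_mul_millsRatio x]

theorem millsRatio_sq_lt (x : ℝ) :
    millsRatio x ^ 2 < (1 - x * millsRatio x) * (2 - x * millsRatio x) := by
  set r := millsRatio
  have hF (y : ℝ) : HasDerivAt (fun y => (1 - y * r y) * (2 - y * r y) - r y ^ 2)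
      ((1 - y * r y) * (y * (1 - y * r y) - r y) +
        y * ((1 - y * r y) * (2 - y * r y) - r y ^ 2)) y := by
    have hu := (hasDerivAt_id y).fun_mul (hasDerivAt_millsRatio y)
    exact (((hu.const_sub 1).fun_mul (hu.const_sub 2)).fun_sub
      ((hasDerivAt_millsRatio y).fun_pow 2)).congr_deriv (by simp only [id_eq]; ring)
  have hbdd : IsBoundedUnder (· ≤ ·) atTop
      fun y => ‖(1 - y * r y) * (2 - y * r y) - r y ^ 2‖ := by
    refine isBoundedUnder_of_eventually_le (a := 2) ?_
    filter_upwards [eventually_ge_atTop 1] with y hy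
    obtain ⟨⟨h0, h1⟩, h2, h3⟩ : r y ∈ Ioo 0 1 ∧ y * r y ∈ Ioo 0 1 :=
      millsRatio_mem_Ioo_of_one_le hy
    rw [norm_eq_abs, abs_le]
    constructor <;> nlinarith
  have := pos_of_deriv_lt_mul (a := x) (fun y _ => hF y) (fun y _ => by
    nlinarith [mul_one_sub_mul_millsRatio_lt_millsRatio y, mul_millsRatio_lt_one y]) hbdd
  linarith

/-- For `x ≥ 0`,
`2/(x + √(x² + 4)) < r(x) < 4/(3x + √(x² + 8))`. -/
theorem millsRatio_bounds (x : ℝ) (hx : 0 ≤ x) :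
    2 / (x + Real.sqrt (x ^ 2 + 4)) < millsRatio x ∧
    millsRatio x < 4 / (3 * x + Real.sqrt (x ^ 2 + 8)) := by
  have hr := millsRatio_pos x
  have hxr := mul_millsRatio_lt_one x
  constructor
  · set s := √(x ^ 2 + 4)
    have hs : s ^ 2 = x ^ 2 + 4 := sq_sqrt (by positivity)
    have hs0 : 0 < s := sqrt_pos.2 (by positivity)
    have hlt : s < 2 * millsRatio x + x :=
      lt_of_pow_lt_pow_left₀ 2 (by positivity)
        (by nlinarith [one_lt_millsRatio_sq_add_mul_millsRatio x])
    rw [div_lt_iff₀ (by positivity)]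
    nlinarith [mul_pos (sub_pos.2 hlt) (add_pos_of_nonneg_of_pos hx hs0)]
  · set s := √(x ^ 2 + 8)
    have hs : s ^ 2 = x ^ 2 + 8 := sq_sqrt (by positivity)
    have hlt : millsRatio x * s < 4 - 3 * (x * millsRatio x) :=
      lt_of_pow_lt_pow_left₀ 2 (by linarith) (by nlinarith [millsRatio_sq_lt x])
    rw [lt_div_iff₀ (by positivity)]
    linarith
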